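/- arXiv:2511.18606 — 4 statements merged into one kernel-verified Lean document; each statement's English description precedes it below -/
import Mathlib

section
/- Let ℓ : S → ℝ be bounded and Lipschitz with constant L_ℓ, let A be a finite nonempty action set, and let f : S × A → S satisfy d(f(s,a), f(s',a)) ≤ L_f · d(s,s') for all s,s',a. Fix γ ∈ [0,1) with γ·L_f < 1. If V : S → ℝ is a bounded function satisfying the fixed-point equation V(s) = (1-γ)ℓ(s) + γ·min{ℓ(s), max_{a∈A} V(f(s,a))} for all s, and V is Lipschitz with some constant, then V is Lipschitz with constant L_ℓ · max{1, (1-γ)/(1-γ·L_f)}. -/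
theorem stmt2 {S A : Type*} [MetricSpace S] [Fintype A] [Nonempty A]
    (ℓ : S → ℝ) (Lℓ : ℝ) (f : S → A → S) (Lf γ : ℝ)
    (hLℓ0 : 0 ≤ Lℓ) (hLf0 : 0 ≤ Lf)
    (hℓbdd : ∃ C, ∀ s, |ℓ s| ≤ C)
    (hℓlip : ∀ s s', |ℓ s - ℓ s'| ≤ Lℓ * dist s s')
    (hflip : ∀ a s s', dist (f s a) (f s' a) ≤ Lf * dist s s')
    (hγ0 : 0 ≤ γ) (hγ1 : γ < 1) (hγLf : γ * Lf < 1)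
    (V : S → ℝ) (hVbdd : ∃ C, ∀ s, |V s| ≤ C)
    (hfix : ∀ s, V s = (1 - γ) * ℓ s + γ * min (ℓ s) (⨆ a, V (f s a)))
    (hVlip : ∃ L, 0 ≤ L ∧ ∀ s s', |V s - V s'| ≤ L * dist s s') :
    ∀ s s', |V s - V s'| ≤ Lℓ * max 1 ((1 - γ) / (1 - γ * Lf)) * dist s s' := by
  obtain ⟨L₀, hL₀0, hL₀⟩ := hVlip
  have hden : (0:ℝ) < 1 - γ * Lf := by linarith
  set Lstar : ℝ := Lℓ * max 1 ((1 - γ) / (1 - γ * Lf)) with hLsdef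
  have hLs0 : 0 ≤ Lstar :=
    mul_nonneg hLℓ0 (le_trans zero_le_one (le_max_left _ _))
  have hLsℓ : Lℓ ≤ Lstar := le_mul_of_one_le_right hLℓ0 (le_max_left _ _)
  have hLs2 : (1 - γ) * Lℓ + γ * Lf * Lstar ≤ Lstar := by
    have h1 : Lℓ * ((1 - γ) / (1 - γ * Lf)) ≤ Lstar :=
      mul_le_mul_of_nonneg_left (le_max_right _ _) hLℓ0
    have h2 : Lℓ * (1 - γ) ≤ Lstar * (1 - γ * Lf) := by
      have := mul_le_mul_of_nonneg_right h1 hden.le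
      calc Lℓ * (1 - γ) = Lℓ * ((1 - γ) / (1 - γ * Lf)) * (1 - γ * Lf) := by
            field_simp
        _ ≤ Lstar * (1 - γ * Lf) := this
    nlinarith
  have hgLs : (1 - γ) * Lℓ + γ * max Lℓ (Lf * Lstar) ≤ Lstar := by
    rcases le_total Lℓ (Lf * Lstar) with h | h
    · rw [max_eq_right h]; nlinarith
    · rw [max_eq_left h]; nlinarith
  -- one-step improvement
  have key : ∀ L : ℝ, 0 ≤ L → (∀ s s', |V s - V s'| ≤ L * dist s s') →
      ∀ s s', |V s - V s'| ≤ ((1 - γ) * Lℓ + γ * max Lℓ (Lf * L)) * dist s s' := by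
    intro L hL0 h s s'
    have hdnn : (0:ℝ) ≤ dist s s' := dist_nonneg
    have hsup : |(⨆ a, V (f s a)) - ⨆ a, V (f s' a)| ≤ L * Lf * dist s s' := by
      have hb : ∀ t t' : S, (⨆ a, V (f t a)) ≤ (⨆ a, V (f t' a)) + L * Lf * dist t t' := by
        intro t t'
        apply ciSup_le
        intro a
        have h1 := (abs_le.1 (h (f t a) (f t' a))).2
        have h2 : L * dist (f t a) (f t' a) ≤ L * (Lf * dist t t') :=
          mul_le_mul_of_nonneg_left (hflip a t t') hL0
        have h3 : V (f t' a) ≤ ⨆ a, V (f t' a) :=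
          le_ciSup (f := fun a => V (f t' a)) (Set.Finite.bddAbove (Set.finite_range _)) a
        linarith
      rw [abs_le]
      constructor
      · have := hb s' s; rw [dist_comm s' s] at this; linarith
      · have := hb s s'; linarith
    have hmin := abs_min_sub_min_le_max (ℓ s) (⨆ a, V (f s a)) (ℓ s') (⨆ a, V (f s' a))
    have hℓ := hℓlip s s'
    have hA : |min (ℓ s) (⨆ a, V (f s a)) - min (ℓ s') (⨆ a, V (f s' a))| ≤
        max Lℓ (Lf * L) * dist s s' := by
      refine hmin.trans (max_le ?_ ?_)
      · exact hℓ.trans (mul_le_mul_of_nonneg_right (le_max_left _ _) hdnn)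
      · refine hsup.trans ?_
        have : L * Lf * dist s s' = Lf * L * dist s s' := by ring
        rw [this]
        exact mul_le_mul_of_nonneg_right (le_max_right _ _) hdnn
    rw [hfix s, hfix s']
    have e : (1 - γ) * ℓ s + γ * min (ℓ s) (⨆ a, V (f s a)) -
        ((1 - γ) * ℓ s' + γ * min (ℓ s') (⨆ a, V (f s' a))) =
        (1 - γ) * (ℓ s - ℓ s') +
        γ * (min (ℓ s) (⨆ a, V (f s a)) - min (ℓ s') (⨆ a, V (f s' a))) := by ring
    rw [e]
    have habs := abs_add_le ((1 - γ) * (ℓ s - ℓ s'))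
      (γ * (min (ℓ s) (⨆ a, V (f s a)) - min (ℓ s') (⨆ a, V (f s' a))))
    rw [abs_mul, abs_mul, abs_of_nonneg (by linarith : (0:ℝ) ≤ 1 - γ),
      abs_of_nonneg hγ0] at habs
    nlinarith [mul_le_mul_of_nonneg_left hℓ (by linarith : (0:ℝ) ≤ 1 - γ),
      mul_le_mul_of_nonneg_left hA hγ0]
  set g : ℝ → ℝ := fun L => (1 - γ) * Lℓ + γ * max Lℓ (Lf * L) with hg
  set L₁ : ℝ := max L₀ Lstar with hL₁def
  have hL₁0 : 0 ≤ L₁ := le_trans hL₀0 (le_max_left _ _)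
  have hL₁lip : ∀ s s', |V s - V s'| ≤ L₁ * dist s s' := fun s s' =>
    (hL₀ s s').trans (mul_le_mul_of_nonneg_right (le_max_left _ _) dist_nonneg)
  have hM0 : 0 ≤ L₁ - Lstar := by
    have := le_max_right L₀ Lstar; simp only [hL₁def]; linarith [le_max_right L₀ Lstar]
  have hr0 : 0 ≤ γ * Lf := mul_nonneg hγ0 hLf0
  have hiter : ∀ n : ℕ, 0 ≤ g^[n] L₁ ∧
      g^[n] L₁ ≤ Lstar + (γ * Lf) ^ n * (L₁ - Lstar) ∧
      ∀ s s', |V s - V s'| ≤ g^[n] L₁ * dist s s' := by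
    intro n
    induction n with
    | zero =>
      simp only [Function.iterate_zero, id_eq, pow_zero, one_mul]
      exact ⟨hL₁0, by linarith, hL₁lip⟩
    | succ n ih =>
      obtain ⟨ih0, ihb, ihlip⟩ := ih
      rw [Function.iterate_succ_apply']
      have hpow : (0:ℝ) ≤ (γ * Lf) ^ n := pow_nonneg hr0 n
      refine ⟨?_, ?_, key _ ih0 ihlip⟩
      · have : (0:ℝ) ≤ max Lℓ (Lf * g^[n] L₁) := le_trans hLℓ0 (le_max_left _ _)
        simp only [hg]
        nlinarith
      · have hmax : max Lℓ (Lf * g^[n] L₁) ≤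
            max Lℓ (Lf * Lstar) + Lf * ((γ * Lf) ^ n * (L₁ - Lstar)) := by
          refine max_le ?_ ?_
          · have : (0:ℝ) ≤ Lf * ((γ * Lf) ^ n * (L₁ - Lstar)) :=
              mul_nonneg hLf0 (mul_nonneg hpow hM0)
            linarith [le_max_left Lℓ (Lf * Lstar)]
          · have h1 : Lf * g^[n] L₁ ≤ Lf * (Lstar + (γ * Lf) ^ n * (L₁ - Lstar)) :=
              mul_le_mul_of_nonneg_left ihb hLf0
            have h2 : Lf * Lstar ≤ max Lℓ (Lf * Lstar) := le_max_right _ _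
            nlinarith
        simp only [hg]
        have hps : (γ * Lf) ^ (n + 1) = (γ * Lf) ^ n * (γ * Lf) := pow_succ _ _
        nlinarith [mul_le_mul_of_nonneg_left hmax hγ0]
  intro s s'
  have hten : Filter.Tendsto (fun n : ℕ => (Lstar + (γ * Lf) ^ n * (L₁ - Lstar)) * dist s s')
      Filter.atTop (nhds (Lstar * dist s s')) := by
    have h0 : Filter.Tendsto (fun n : ℕ => (γ * Lf) ^ n) Filter.atTop (nhds 0) :=
      tendsto_pow_atTop_nhds_zero_of_lt_one hr0 hγLf
    have h1 := ((h0.mul_const (L₁ - Lstar)).const_add Lstar).mul_const (dist s s')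
    simpa using h1
  refine ge_of_tendsto' hten ?_
  intro n
  exact ((hiter n).2.2 s s').trans (mul_le_mul_of_nonneg_right (hiter n).2.1 dist_nonneg)
end

section
/- Let V satisfy V(s) = min{ℓ(s), max_{a∈A} V(f(s,a))}. If V(s₀) ≥ 0 then there exists an infinite sequence of actions (a_t) such that the resulting trajectory s_{t+1} = f(s_t, a_t) satisfies ℓ(s_t) ≥ 0 for all t ≥ 0, i.e., the trajectory never enters the failure set {s : ℓ(s) < 0}. -/
theorem stmt8 {S A : Type*} [Fintype A] [Nonempty A]
    (ℓ : S → ℝ) (f : S → A → S)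
    (V : S → ℝ) (hfix : ∀ s, V s = min (ℓ s) (⨆ a, V (f s a)))
    (s₀ : S) (h₀ : 0 ≤ V s₀) :
    ∃ a : ℕ → A, ∃ traj : ℕ → S, traj 0 = s₀ ∧
      (∀ t, traj (t + 1) = f (traj t) (a t)) ∧
      ∀ t, 0 ≤ ℓ (traj t) := by
  have hstep : ∀ s : S, ∃ a : A, V s ≤ V (f s a) := by
    intro s
    obtain ⟨a, ha⟩ := Finite.exists_max (fun a => V (f s a))
    refine ⟨a, ?_⟩
    calc V s ≤ ⨆ b, V (f s b) := by rw [hfix s]; exact min_le_right _ _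
    _ ≤ V (f s a) := ciSup_le ha
  choose g hg using hstep
  let traj : ℕ → S := fun t => Nat.rec s₀ (fun _ s => f s (g s)) t
  refine ⟨fun t => g (traj t), traj, rfl, fun t => rfl, ?_⟩
  have hV : ∀ t, 0 ≤ V (traj t) := by
    intro t
    induction t with
    | zero => exact h₀
    | succ n ih => exact ih.trans (hg (traj n))
  intro t
  have := hV t
  rw [hfix (traj t)] at this
  exact this.trans (min_le_left _ _)
end

section
/- Let ℓ₁, ℓ₂ : S → ℝ be bounded margin functions and let V₁, V₂ be the corresponding unique bounded solutions of V_i(s) = (1-γ)ℓ_i(s) + γ·min{ℓ_i(s), max_{a∈A} V_i(f(s,a))}, γ ∈ [0,1). Then ‖V₁ - V₂‖_∞ ≤ ‖ℓ₁ - ℓ₂‖_∞. -/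
theorem stmt12 {S A : Type*} [Nonempty S] [Fintype A] [Nonempty A]
    (γ : ℝ) (hγ0 : 0 ≤ γ) (hγ1 : γ < 1)
    (ℓ₁ ℓ₂ : S → ℝ) (hℓ₁bdd : ∃ C, ∀ s, |ℓ₁ s| ≤ C) (hℓ₂bdd : ∃ C, ∀ s, |ℓ₂ s| ≤ C)
    (f : S → A → S)
    (V₁ V₂ : S → ℝ) (hV₁bdd : ∃ C, ∀ s, |V₁ s| ≤ C) (hV₂bdd : ∃ C, ∀ s, |V₂ s| ≤ C)
    (hfix₁ : ∀ s, V₁ s = (1 - γ) * ℓ₁ s + γ * min (ℓ₁ s) (⨆ a, V₁ (f s a)))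
    (hfix₂ : ∀ s, V₂ s = (1 - γ) * ℓ₂ s + γ * min (ℓ₂ s) (⨆ a, V₂ (f s a)))
    (C : ℝ) (hC : ∀ s, |ℓ₁ s - ℓ₂ s| ≤ C) :
    ∀ s, |V₁ s - V₂ s| ≤ C := by
  obtain ⟨C₁, hC₁⟩ := hV₁bdd
  obtain ⟨C₂, hC₂⟩ := hV₂bdd
  have hbdd : BddAbove (Set.range fun s => |V₁ s - V₂ s|) := by
    refine ⟨C₁ + C₂, ?_⟩
    rintro _ ⟨s, rfl⟩
    calc |V₁ s - V₂ s| ≤ |V₁ s| + |V₂ s| := abs_sub _ _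
      _ ≤ C₁ + C₂ := add_le_add (hC₁ s) (hC₂ s)
  set D := ⨆ s, |V₁ s - V₂ s| with hD
  have hle : ∀ s, |V₁ s - V₂ s| ≤ D := fun s => le_ciSup hbdd s
  have hsup : ∀ s, |(⨆ a, V₁ (f s a)) - (⨆ a, V₂ (f s a))| ≤ D := by
    intro s
    rw [abs_le]
    constructor
    · have h1 : (⨆ a, V₂ (f s a)) ≤ (⨆ a, V₁ (f s a)) + D := by
        apply ciSup_le
        intro a
        have h2 : V₁ (f s a) ≤ ⨆ a, V₁ (f s a) :=
          le_ciSup (Set.Finite.bddAbove (Set.finite_range _)) a (f := fun a => V₁ (f s a))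
        have h3 := abs_le.mp (hle (f s a))
        linarith [h3.1]
      linarith
    · have h1 : (⨆ a, V₁ (f s a)) ≤ (⨆ a, V₂ (f s a)) + D := by
        apply ciSup_le
        intro a
        have h2 : V₂ (f s a) ≤ ⨆ a, V₂ (f s a) :=
          le_ciSup (Set.Finite.bddAbove (Set.finite_range _)) a (f := fun a => V₂ (f s a))
        have h3 := abs_le.mp (hle (f s a))
        linarith [h3.2]
      linarith
  have hC0 : 0 ≤ C := le_trans (abs_nonneg _) (hC Classical.ofNonempty)
  have key : ∀ s, |V₁ s - V₂ s| ≤ (1 - γ) * C + γ * max C D := by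
    intro s
    rw [hfix₁ s, hfix₂ s]
    have hmin : |min (ℓ₁ s) (⨆ a, V₁ (f s a)) - min (ℓ₂ s) (⨆ a, V₂ (f s a))| ≤ max C D := by
      refine (abs_min_sub_min_le_max _ _ _ _).trans ?_
      exact max_le_max (hC s) (hsup s)
    calc |((1 - γ) * ℓ₁ s + γ * min (ℓ₁ s) (⨆ a, V₁ (f s a))) -
          ((1 - γ) * ℓ₂ s + γ * min (ℓ₂ s) (⨆ a, V₂ (f s a)))|
        = |(1 - γ) * (ℓ₁ s - ℓ₂ s) + γ * (min (ℓ₁ s) (⨆ a, V₁ (f s a)) -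
            min (ℓ₂ s) (⨆ a, V₂ (f s a)))| := by ring_nf
      _ ≤ |(1 - γ) * (ℓ₁ s - ℓ₂ s)| + |γ * (min (ℓ₁ s) (⨆ a, V₁ (f s a)) -
            min (ℓ₂ s) (⨆ a, V₂ (f s a)))| := abs_add_le _ _
      _ ≤ (1 - γ) * C + γ * max C D := by
          rw [abs_mul, abs_mul, abs_of_nonneg (by linarith : (0:ℝ) ≤ 1 - γ),
            abs_of_nonneg hγ0]
          exact add_le_add (by nlinarith [hC s]) (by nlinarith [hmin])
  have hDle : D ≤ (1 - γ) * C + γ * max C D := ciSup_le key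
  have hDC : D ≤ C := by
    rcases max_cases C D with ⟨h1, h2⟩ | ⟨h1, h2⟩
    · exact h2
    · rw [h1] at hDle; nlinarith
  exact fun s => (hle s).trans hDC
end

section
/- Let ℓ₁ ≤ ℓ₂ pointwise be bounded functions on S and let V₁, V₂ be the unique bounded solutions of the discounted HJ equations V_i(s) = (1-γ)ℓ_i(s) + γ·min{ℓ_i(s), max_{a∈A} V_i(f(s,a))}. Then V₁ ≤ V₂ pointwise. -/
theorem stmt13 {S A : Type*} [Nonempty S] [Fintype A] [Nonempty A]
    (γ : ℝ) (hγ0 : 0 ≤ γ) (hγ1 : γ < 1)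
    (ℓ₁ ℓ₂ : S → ℝ) (hℓ₁bdd : ∃ C, ∀ s, |ℓ₁ s| ≤ C) (hℓ₂bdd : ∃ C, ∀ s, |ℓ₂ s| ≤ C)
    (hmono : ∀ s, ℓ₁ s ≤ ℓ₂ s)
    (f : S → A → S)
    (V₁ V₂ : S → ℝ) (hV₁bdd : ∃ C, ∀ s, |V₁ s| ≤ C) (hV₂bdd : ∃ C, ∀ s, |V₂ s| ≤ C)
    (hfix₁ : ∀ s, V₁ s = (1 - γ) * ℓ₁ s + γ * min (ℓ₁ s) (⨆ a, V₁ (f s a)))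
    (hfix₂ : ∀ s, V₂ s = (1 - γ) * ℓ₂ s + γ * min (ℓ₂ s) (⨆ a, V₂ (f s a))) :
    ∀ s, V₁ s ≤ V₂ s := by
  obtain ⟨C₁, hC₁⟩ := hV₁bdd
  obtain ⟨C₂, hC₂⟩ := hV₂bdd
  set D : ℝ := sSup (Set.range fun s => V₁ s - V₂ s) with hDdef
  have hbdd : BddAbove (Set.range fun s => V₁ s - V₂ s) := by
    refine ⟨C₁ + C₂, ?_⟩
    rintro x ⟨s, rfl⟩
    have := abs_le.1 (hC₁ s)
    have := abs_le.1 (hC₂ s)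
    dsimp; linarith [this.2, (abs_le.1 (hC₁ s)).2, (abs_le.1 (hC₂ s)).1]
  have hD_ub : ∀ s, V₁ s - V₂ s ≤ D := fun s =>
    le_csSup hbdd ⟨s, rfl⟩
  -- key inequality: D ≤ γ * max 0 D
  have hkey : D ≤ γ * max 0 D := by
    refine csSup_le (Set.range_nonempty _) ?_
    rintro x ⟨s, rfl⟩
    have hM : (⨆ a, V₁ (f s a)) ≤ (⨆ a, V₂ (f s a)) + D := by
      refine ciSup_le fun a => ?_
      have h1 : V₁ (f s a) - V₂ (f s a) ≤ D := hD_ub _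
      have h2 : V₂ (f s a) ≤ ⨆ a, V₂ (f s a) :=
        le_ciSup (f := fun a => V₂ (f s a)) (Set.Finite.bddAbove (Set.finite_range _)) a
      linarith
    have hmin : min (ℓ₁ s) (⨆ a, V₁ (f s a)) ≤
        min (ℓ₂ s) (⨆ a, V₂ (f s a)) + max 0 D := by
      rw [← min_add_add_right]
      refine le_min ?_ ?_
      · have := hmono s
        have := min_le_left (ℓ₁ s) (⨆ a, V₁ (f s a))
        have := le_max_left (0:ℝ) D
        linarith
      · have := min_le_right (ℓ₁ s) (⨆ a, V₁ (f s a))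
        have := le_max_right (0:ℝ) D
        linarith
    have h1γ : (0:ℝ) ≤ 1 - γ := by linarith
    have hmul : γ * min (ℓ₁ s) (⨆ a, V₁ (f s a)) ≤
        γ * (min (ℓ₂ s) (⨆ a, V₂ (f s a)) + max 0 D) :=
      mul_le_mul_of_nonneg_left hmin hγ0
    have hℓ : (1 - γ) * ℓ₁ s ≤ (1 - γ) * ℓ₂ s :=
      mul_le_mul_of_nonneg_left (hmono s) h1γ
    have e1 := hfix₁ s
    have e2 := hfix₂ s
    dsimp
    rw [e1, e2]
    ring_nf
    nlinarith [hmul, hℓ]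
  have hD0 : D ≤ 0 := by
    by_contra h
    push_neg at h
    rw [max_eq_right h.le] at hkey
    nlinarith
  intro s
  have := hD_ub s
  linarith
end
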